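/- arXiv:1501.03646 — 2 statements merged into one kernel-verified Lean document; each statement's English description precedes it below -/
import Mathlib

section
/- Let Θ, I, E > 0 and η ∈ ℝ with d ≥ 1. Suppose q := Θ·I/(d·E²) ≥ 1 and I' ≤ −(2/d)(1−η)·I²/E, Θ' = 2E, E' = (1−p)I with η = d(1−p). Then H := Θ^{−η/2}·E satisfies H''/(1−p) ≤ (d·E³/Θ^{η/2+2})·(η + 2 − 3ηq − 2(1−η)q²). In particular, since q ≥ 1 and 0 ≤ η ≤ 1 imply η + 2 − 3ηq − 2(1−η)q² ≤ 0, one gets H'' ≤ 0 when p < 1. -/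
/-!
Differentiating `H = Θ^{-η/2} E` twice along `Θ' = 2E`, `E' = (1 - p) I` and using
`η = d (1 - p)` gives `H'' = (1 - p) Θ^{-η/2-2} B` with
`B = -(η + 2) E (Θ I - d E²) + 2 (1 - η) Θ E I + Θ² I'`.
The bound on `I'` bounds `B` by `d E³ (η + 2 - 3ηq - 2(1 - η)q²)` with `q = Θ I / (d E²)`,
and this polynomial factors as `(1 - q)(2(1 - η)q + η + 2)`, which is `≤ 0` for `q ≥ 1`,
`η ≤ 1`. The case `p = 1` cannot occur: `E` would be constant, so `Θ` would be a
nonconstant affine function and vanish somewhere.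
-/

open Real

theorem exists_eq_zero_of_deriv_eq_const {f : ℝ → ℝ} {c : ℝ} (hc : c ≠ 0)
    (hf : Differentiable ℝ f) (hf' : ∀ t, deriv f t = c) : ∃ t, f t = 0 := by
  have hg : ∀ t, HasDerivAt (fun s => f s - c * s) 0 t := fun t => by
    have h : HasDerivAt (fun s => f s - c * s) (deriv f t - c * 1) t :=
      (hf t).hasDerivAt.sub ((hasDerivAt_id t).const_mul c)
    rwa [hf' t, mul_one, sub_self] at h
  have haffine : ∀ t, f t - c * t = f 0 - c * 0 :=
    fun t => is_const_of_deriv_eq_zero (fun s => (hg s).differentiableAt) (fun s => (hg s).deriv) t 0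
  refine ⟨-f 0 / c, ?_⟩
  have h := haffine (-f 0 / c)
  rw [mul_div_cancel₀ _ hc] at h
  linarith

theorem renyi_poly_eq (η q : ℝ) :
    η + 2 - 3 * η * q - 2 * (1 - η) * q ^ 2 = (1 - q) * (2 * (1 - η) * q + η + 2) := by
  ring

theorem renyi_poly_nonpos {η q : ℝ} (hη : η ≤ 1) (hq : 1 ≤ q) :
    η + 2 - 3 * η * q - 2 * (1 - η) * q ^ 2 ≤ 0 := by
  rw [renyi_poly_eq]
  exact mul_nonpos_of_nonpos_of_nonneg (by linarith) (by nlinarith)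

section Derivatives

variable {Θ E I : ℝ → ℝ} {d p η t I' : ℝ}

theorem hasDerivAt_renyi_power (hη : η = d * (1 - p)) (hΘ : HasDerivAt Θ (2 * E t) t)
    (hE : HasDerivAt E ((1 - p) * I t) t) (hΘt : Θ t ≠ 0) :
    HasDerivAt (fun s => Θ s ^ (-(η / 2)) * E s)
      ((1 - p) * (Θ t ^ (-(η / 2) - 1) * (Θ t * I t - d * E t ^ 2))) t := by
  have h : HasDerivAt (fun s => Θ s ^ (-(η / 2)) * E s) _ t :=
    (hΘ.rpow_const (p := -(η / 2)) (Or.inl hΘt)).mul hE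
  convert h using 1
  rw [rpow_sub_one hΘt, hη]
  field_simp
  ring

theorem hasDerivAt_renyi_power_deriv (hη : η = d * (1 - p)) (hΘ : HasDerivAt Θ (2 * E t) t)
    (hE : HasDerivAt E ((1 - p) * I t) t) (hI : HasDerivAt I I' t) (hΘt : Θ t ≠ 0) :
    HasDerivAt (fun s => (1 - p) * (Θ s ^ (-(η / 2) - 1) * (Θ s * I s - d * E s ^ 2)))
      ((1 - p) * (Θ t ^ (-(η / 2) - 2) * (-(η + 2) * E t * (Θ t * I t - d * E t ^ 2)
        + 2 * (1 - η) * Θ t * E t * I t + Θ t ^ 2 * I'))) t := by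
  have hinner : HasDerivAt (fun s => Θ s * I s - d * E s ^ 2)
      (2 * E t * I t + Θ t * I' - d * (2 * E t * ((1 - p) * I t))) t := by
    have h : HasDerivAt (fun s => Θ s * I s - d * E s ^ 2) _ t :=
      (hΘ.mul hI).sub ((hE.pow 2).const_mul d)
    convert h using 1
    push_cast
    ring
  have h : HasDerivAt (fun s => (1 - p) * (Θ s ^ (-(η / 2) - 1) * (Θ s * I s - d * E s ^ 2))) _ t :=
    ((hΘ.rpow_const (p := -(η / 2) - 1) (Or.inl hΘt)).mul hinner).const_mul (1 - p)
  convert h using 1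
  rw [show -(η / 2) - 1 - 1 = -(η / 2) - 2 by ring, show -(η / 2) - 1 = -(η / 2) - 2 + 1 by ring,
    rpow_add_one hΘt, hη]
  ring

end Derivatives

theorem renyi_bracket_le {d η θ e i i' : ℝ} (hd : 0 < d) (he : 0 < e)
    (hi' : i' ≤ -(2 / d) * (1 - η) * i ^ 2 / e) :
    -(η + 2) * e * (θ * i - d * e ^ 2) + 2 * (1 - η) * θ * e * i + θ ^ 2 * i'
      ≤ d * e ^ 3 * (η + 2 - 3 * η * (θ * i / (d * e ^ 2))
        - 2 * (1 - η) * (θ * i / (d * e ^ 2)) ^ 2) := by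
  have hbound := mul_le_mul_of_nonneg_left hi' (sq_nonneg θ)
  have hexpand : d * e ^ 3 * (η + 2 - 3 * η * (θ * i / (d * e ^ 2))
        - 2 * (1 - η) * (θ * i / (d * e ^ 2)) ^ 2)
      = -(η + 2) * e * (θ * i - d * e ^ 2) + 2 * (1 - η) * θ * e * i
        + θ ^ 2 * (-(2 / d) * (1 - η) * i ^ 2 / e) := by
    field_simp
    ring
  linarith

theorem renyi_power_second_deriv_general {d : ℕ} (hd : 1 ≤ d) (p η : ℝ) (hη : η = d * (1 - p))
    (Θ E I : ℝ → ℝ)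
    (hΘpos : ∀ t, 0 < Θ t) (hEpos : ∀ t, 0 < E t)
    (hΘd : Differentiable ℝ Θ) (hEd : Differentiable ℝ E) (hId : Differentiable ℝ I)
    (hΘ' : ∀ t, deriv Θ t = 2 * E t)
    (hE' : ∀ t, deriv E t = (1 - p) * I t)
    (hI' : ∀ t, deriv I t ≤ -(2 / (d : ℝ)) * (1 - η) * (I t) ^ 2 / E t)
    (hq : ∀ t, 1 ≤ Θ t * I t / ((d : ℝ) * (E t) ^ 2))
    (H : ℝ → ℝ) (hH : ∀ t, H t = (Θ t) ^ (-(η / 2)) * E t) :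
    (∀ t, deriv (deriv H) t / (1 - p)
        ≤ ((d : ℝ) * (E t) ^ 3 / (Θ t) ^ (η / 2 + 2))
            * (η + 2 - 3 * η * (Θ t * I t / ((d : ℝ) * (E t) ^ 2))
                - 2 * (1 - η) * (Θ t * I t / ((d : ℝ) * (E t) ^ 2)) ^ 2))
      ∧ (0 ≤ η → η ≤ 1 → p < 1 → ∀ t, deriv (deriv H) t ≤ 0) := by
  have hd0 : (0 : ℝ) < d := by exact_mod_cast hd
  have hp : p ≠ 1 := by
    rintro rfl
    have hEconst : ∀ t, E t = E 0 := fun t =>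
      is_const_of_deriv_eq_zero hEd (fun s => by rw [hE', sub_self, zero_mul]) t 0
    obtain ⟨t, ht⟩ := exists_eq_zero_of_deriv_eq_const (c := 2 * E 0)
      (by linarith [hEpos 0]) hΘd (fun t => by rw [hΘ', hEconst])
    exact (hΘpos t).ne' ht
  have hΘ (t : ℝ) : HasDerivAt Θ (2 * E t) t := hΘ' t ▸ (hΘd t).hasDerivAt
  have hE (t : ℝ) : HasDerivAt E ((1 - p) * I t) t := hE' t ▸ (hEd t).hasDerivAt
  have hH' : deriv H = fun t => (1 - p) * (Θ t ^ (-(η / 2) - 1) * (Θ t * I t - d * E t ^ 2)) := by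
    rw [funext hH]
    exact funext fun t => (hasDerivAt_renyi_power hη (hΘ t) (hE t) (hΘpos t).ne').deriv
  have hH'' (t : ℝ) : deriv (deriv H) t / (1 - p)
      ≤ ((d : ℝ) * (E t) ^ 3 / (Θ t) ^ (η / 2 + 2))
        * (η + 2 - 3 * η * (Θ t * I t / ((d : ℝ) * (E t) ^ 2))
          - 2 * (1 - η) * (Θ t * I t / ((d : ℝ) * (E t) ^ 2)) ^ 2) := by
    rw [hH', (hasDerivAt_renyi_power_deriv hη (hΘ t) (hE t) (hId t).hasDerivAt
      (hΘpos t).ne').deriv, mul_div_cancel_left₀ _ (sub_ne_zero.2 hp.symm),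
      show -(η / 2) - 2 = -(η / 2 + 2) by ring, rpow_neg (hΘpos t).le, inv_mul_eq_div,
      div_mul_eq_mul_div]
    exact div_le_div_of_nonneg_right (renyi_bracket_le hd0 (hEpos t) (hI' t))
      (rpow_pos_of_pos (hΘpos t) _).le
  refine ⟨hH'', fun _ hη1 hp1 t => ?_⟩
  have hcoeff : 0 ≤ (d : ℝ) * (E t) ^ 3 / (Θ t) ^ (η / 2 + 2) :=
    div_nonneg (mul_pos hd0 (pow_pos (hEpos t) 3)).le (rpow_pos_of_pos (hΘpos t) _).le
  have hnonpos := (hH'' t).trans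
    (mul_nonpos_of_nonneg_of_nonpos hcoeff (renyi_poly_nonpos hη1 (hq t)))
  simpa using (div_le_iff₀ (sub_pos.2 hp1)).1 hnonpos

/-- Second derivative estimate on the Rényi entropy power `H = Θ^{−η/2} E`. -/
theorem renyi_power_second_deriv {d : ℕ} (hd : 1 ≤ d) (p η : ℝ) (hη : η = d * (1 - p))
    (Θ E I : ℝ → ℝ)
    (hΘpos : ∀ t, 0 < Θ t) (hEpos : ∀ t, 0 < E t) (hIpos : ∀ t, 0 < I t)
    (hΘd : Differentiable ℝ Θ) (hEd : Differentiable ℝ E) (hId : Differentiable ℝ I)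
    (hΘ' : ∀ t, deriv Θ t = 2 * E t)
    (hE' : ∀ t, deriv E t = (1 - p) * I t)
    (hI' : ∀ t, deriv I t ≤ -(2 / (d : ℝ)) * (1 - η) * (I t) ^ 2 / E t)
    (hq : ∀ t, 1 ≤ Θ t * I t / ((d : ℝ) * (E t) ^ 2))
    (H : ℝ → ℝ) (hH : ∀ t, H t = (Θ t) ^ (-(η / 2)) * E t)
    (hHd : Differentiable ℝ (deriv H)) :
    (∀ t, deriv (deriv H) t / (1 - p)
        ≤ ((d : ℝ) * (E t) ^ 3 / (Θ t) ^ (η / 2 + 2))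
            * (η + 2 - 3 * η * (Θ t * I t / ((d : ℝ) * (E t) ^ 2))
                - 2 * (1 - η) * (Θ t * I t / ((d : ℝ) * (E t) ^ 2)) ^ 2))
      ∧ (0 ≤ η → η ≤ 1 → p < 1 → ∀ t, deriv (deriv H) t ≤ 0) :=
  renyi_power_second_deriv_general hd p η hη Θ E I hΘpos hEpos hΘd hEd hId hΘ' hE' hI' hq H hH
end

section
/- Let q : [0,∞) → (0,∞) and Θ : [0,∞) → (0,∞) be differentiable with Θ increasing, and suppose q' ≤ q(1−q)·Θ'/Θ with q(0) = q₀ ≥ 1. Then for all t ≥ 0, q(t) ≤ q₀Θ(t)/(q₀Θ(t) − (q₀−1)Θ(0)). -/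
open Set

/-- ODE comparison: if `q' ≤ q(1−q)·Θ'/Θ` with `q(0) = q₀ ≥ 1` and `Θ` positive
increasing, then `q(t) ≤ q₀Θ(t)/(q₀Θ(t) − (q₀−1)Θ(0))`. -/
theorem q_comparison (q Θ : ℝ → ℝ)
    (hqd : Differentiable ℝ q) (hΘd : Differentiable ℝ Θ)
    (hqpos : ∀ t, 0 < q t) (hΘpos : ∀ t, 0 < Θ t)
    (hΘinc : StrictMonoOn Θ (Ici 0))
    (hq' : ∀ t ≥ (0 : ℝ), deriv q t ≤ q t * (1 - q t) * deriv Θ t / Θ t)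
    (hq0 : 1 ≤ q 0) :
    ∀ t ≥ (0 : ℝ), q t ≤ q 0 * Θ t / (q 0 * Θ t - (q 0 - 1) * Θ 0) := by
  intro t ht
  set F : ℝ → ℝ := fun s => Θ s - Θ s / q s with hF
  have hFd : Differentiable ℝ F := hΘd.sub (hΘd.div hqd fun s => (hqpos s).ne')
  have hderiv : ∀ s, deriv F s
      = deriv Θ s - (deriv Θ s * q s - Θ s * deriv q s) / (q s) ^ 2 := by
    intro s
    have h1 : HasDerivAt (fun u => Θ u / q u)
        ((deriv Θ s * q s - Θ s * deriv q s) / (q s) ^ 2) s :=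
      ((hΘd s).hasDerivAt).div ((hqd s).hasDerivAt) (hqpos s).ne'
    exact (((hΘd s).hasDerivAt).sub h1).deriv
  have hmono : AntitoneOn F (Ici 0) := by
    apply antitoneOn_of_deriv_nonpos (convex_Ici 0) hFd.continuous.continuousOn
      (fun s _ => (hFd s).differentiableWithinAt)
    intro s hs
    rw [interior_Ici] at hs
    rw [hderiv]
    have hq := hq' s hs.le
    have hqs := hqpos s
    have hΘs := hΘpos s
    have key : deriv q s * Θ s ≤ q s * (1 - q s) * deriv Θ s :=
      (le_div_iff₀ hΘs).mp hq
    rw [sub_nonpos, le_div_iff₀ (by positivity : (0:ℝ) < (q s) ^ 2)]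
    nlinarith [key]
  have hFt : F t ≤ F 0 := hmono (mem_Ici.mpr le_rfl) (mem_Ici.mpr ht) ht
  have hΘ0t : Θ 0 ≤ Θ t := hΘinc.monotoneOn (mem_Ici.mpr le_rfl) (mem_Ici.mpr ht) ht
  have hq0p := hqpos 0
  have hqt := hqpos t
  have hΘ0 := hΘpos 0
  have hΘt := hΘpos t
  have hD : 0 < q 0 * Θ t - (q 0 - 1) * Θ 0 := by nlinarith
  rw [le_div_iff₀ hD]
  have h2 : (Θ t - Θ t / q t) * (q t * q 0) ≤ (Θ 0 - Θ 0 / q 0) * (q t * q 0) :=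
    mul_le_mul_of_nonneg_right hFt (by positivity)
  have e1 : Θ t / q t * q t = Θ t := div_mul_cancel₀ _ hqt.ne'
  have e2 : Θ 0 / q 0 * q 0 = Θ 0 := div_mul_cancel₀ _ hq0p.ne'
  nlinarith [h2, e1, e2]
end
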